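/- Let n ≥ 2 be an integer, ε_n = e^{2πi/n}, and let C be the sequence of Ramanujan sums C_k = Σ_{1 ≤ j ≤ n, gcd(j,n)=1} ε_n^{kj}. Let r, p ∈ ℤ with r + p = 1, let q ∈ ℂ, λ ∈ ℂ with λ^n ≠ 1, and let m ≥ 1 be an integer. Then (-1)^{p-1} m · E_{m,n}^{r,p}(nq,λ;C) = φ(n) · B_m(nq,λ) - n^m Σ_{1 ≤ j ≤ n, gcd(j,n)=1} λ^j B_m(q + j/n, λ^n), where φ is Euler's totient function. -/

import Mathlib

open Finset

/-- `eps n = e^{2πi/n}`, a primitive `n`-th root of unity in `ℂ`. -/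
noncomputable def eps (n : ℕ) : ℂ := Complex.exp (2 * Real.pi * Complex.I / n)

/-- `expPS q = e^{qt} = Σ_j q^j t^j / j!` as a formal power series in `ℂ[[t]]`. -/
noncomputable def expPS (q : ℂ) : PowerSeries ℂ :=
  PowerSeries.mk fun j => q ^ j / j.factorial

/-- The Dedekind sum
`E_{m,n}^{r,p}(q,λ;C) = Σ_{k=1}^{n-1} ε_n^{-kr} H_{m-1}^{(p)}(q,λ,ε_n^{-k}) C_{-k} / (1-ε_n^k)^p`,
where `H p m q λ γ` denotes the generalized Frobenius–Euler polynomial `H_m^{(p)}(q,λ,γ)`. -/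
noncomputable def dedekindE (H : ℤ → ℕ → ℂ → ℂ → ℂ → ℂ) (n m : ℕ) (r p : ℤ)
    (q lam : ℂ) (Cf : ℤ → ℂ) : ℂ :=
  ∑ k ∈ Finset.Ico 1 n,
    eps n ^ (-(k : ℤ) * r) * H p (m - 1) q lam (eps n ^ (-(k : ℤ))) * Cf (-(k : ℤ))
      / (1 - eps n ^ (k : ℤ)) ^ p

open PowerSeries in
private lemma expPS_eq (a : ℂ) : expPS a = rescale a (PowerSeries.exp ℂ) := by
  ext j
  simp [expPS, coeff_rescale, PowerSeries.exp, div_eq_mul_inv]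

open PowerSeries in
private lemma expPS_mul (a b : ℂ) : expPS a * expPS b = expPS (a + b) := by
  rw [expPS_eq, expPS_eq, expPS_eq, PowerSeries.exp_mul_exp_eq_exp_add]

open PowerSeries in
private lemma rescale_expPS (a b : ℂ) : rescale a (expPS b) = expPS (b * a) := by
  rw [expPS_eq, expPS_eq, PowerSeries.rescale_rescale]

open PowerSeries in
private lemma expPS_pow (j : ℕ) : expPS 1 ^ j = expPS (j : ℂ) := by
  rw [expPS_eq, PowerSeries.rescale_one, RingHom.id_apply, PowerSeries.exp_pow_eq_rescale_exp,
    ← expPS_eq]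

open PowerSeries in
private lemma constantCoeff_expPS (a : ℂ) : PowerSeries.constantCoeff (expPS a) = 1 := by
  simp [expPS, ← PowerSeries.coeff_zero_eq_constantCoeff]

open PowerSeries in
private lemma rescale_C' (a b : ℂ) :
    rescale a (PowerSeries.C b) = PowerSeries.C b := by
  ext j
  by_cases h : j = 0 <;> simp [coeff_rescale, PowerSeries.coeff_C, h]

open PowerSeries in
private lemma prod_sub_roots {n : ℕ} (hn0 : 0 < n) {ε : ℂ} (hε : IsPrimitiveRoot ε n)
    (Z : PowerSeries ℂ) :
    ∏ i ∈ Finset.range n, (Z - PowerSeries.C (ε ^ i)) = Z ^ n - 1 := by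
  have hpow1 : ∀ i : ℕ, (ε ^ i) ^ n = 1 := fun i => by
    rw [← pow_mul, mul_comm, pow_mul, hε.pow_eq_one, one_pow]
  have himg : (Finset.range n).image (ε ^ ·) = Polynomial.nthRootsFinset n (1 : ℂ) := by
    apply Finset.eq_of_subset_of_card_le
    · intro x hx
      obtain ⟨i, hi, rfl⟩ := Finset.mem_image.mp hx
      exact (Polynomial.mem_nthRootsFinset hn0 (1 : ℂ)).mpr (hpow1 i)
    · rw [hε.card_nthRootsFinset, Finset.card_image_of_injOn hε.injOn_pow, Finset.card_range]
  have hPoly : ∏ i ∈ Finset.range n, (Polynomial.X - Polynomial.C (ε ^ i))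
      = Polynomial.X ^ n - 1 := by
    calc ∏ i ∈ Finset.range n, (Polynomial.X - Polynomial.C (ε ^ i))
        = ∏ z ∈ (Finset.range n).image (ε ^ ·), (Polynomial.X - Polynomial.C z) :=
          (Finset.prod_image (s := Finset.range n) (g := fun i => ε ^ i)
            (f := fun z : ℂ => Polynomial.X - Polynomial.C z) fun i hi j hj h =>
            hε.pow_inj (Finset.mem_range.mp hi) (Finset.mem_range.mp hj) h).symm
      _ = ∏ z ∈ Polynomial.nthRootsFinset n (1 : ℂ), (Polynomial.X - Polynomial.C z) := by rw [himg]
      _ = Polynomial.X ^ n - 1 := (Polynomial.X_pow_sub_one_eq_prod hn0 hε).symm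
  have h := congrArg (Polynomial.aeval Z) hPoly
  simpa only [map_prod, map_sub, map_pow, map_one, Polynomial.aeval_X, Polynomial.aeval_C,
    PowerSeries.algebraMap_apply, Algebra.algebraMap_self, RingHom.id_apply] using h

open PowerSeries in
private lemma series_main
    (n : ℕ) (hn : 2 ≤ n) (ε : ℂ) (hε : IsPrimitiveRoot ε n)
    (q lam : ℂ) (hlam : lam ^ n ≠ 1)
    (S : Finset ℕ) (hjS : ∀ j ∈ S, 1 ≤ j ∧ j < n)
    (H : ℕ → ℂ → ℂ) (p : ℤ)
    (hH : ∀ γ : ℂ, γ ≠ 1 → lam ≠ γ →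
      (PowerSeries.C lam * expPS 1 - PowerSeries.C γ) *
          PowerSeries.mk (fun m => H m γ / m.factorial)
        = PowerSeries.C ((1 - γ) ^ p) * expPS ((n : ℂ) * q))
    (B : ℕ → ℂ → ℂ → ℂ)
    (hB : ∀ (q' lam' : ℂ), lam' ≠ 1 →
      (PowerSeries.C lam' * expPS 1 - 1) *
          PowerSeries.mk (fun m => B m q' lam' / m.factorial)
        = PowerSeries.X * expPS q')
    (c : ℕ → ℂ)
    (hc : ∀ k ∈ Finset.Ico 1 n, c k * (1 - ε ^ (n - k)) ^ p
        = -(ε ^ (n - k) * ∑ j ∈ S, (ε ^ (n - k)) ^ j)) :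
    ∑ k ∈ Finset.Ico 1 n, PowerSeries.C (c k) *
        (PowerSeries.X * PowerSeries.mk (fun s => H s (ε ^ (n - k)) / s.factorial))
      = PowerSeries.C (S.card : ℂ) *
          PowerSeries.mk (fun s => B s ((n : ℂ) * q) lam / s.factorial)
        - ∑ j ∈ S, PowerSeries.C (lam ^ j) *
            rescale (n : ℂ) (PowerSeries.mk (fun s => B s (q + j / n) (lam ^ n) / s.factorial)) := by
  have hn0 : 0 < n := by omega
  have hnC : (n : ℂ) ≠ 0 := Nat.cast_ne_zero.mpr (by omega)
  have hεn : ε ^ n = 1 := hε.pow_eq_one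
  have hpow1 : ∀ i : ℕ, (ε ^ i) ^ n = 1 := fun i => by
    rw [← pow_mul, mul_comm, pow_mul, hεn, one_pow]
  have hεne1 : ∀ i : ℕ, 0 < i → i < n → ε ^ i ≠ 1 := fun i h1 h2 =>
    hε.pow_ne_one_of_pos_of_lt h1.ne' h2
  have hlam_eps : ∀ i : ℕ, lam ≠ ε ^ i := fun i h => hlam (by rw [h, hpow1])
  have hlam1 : lam ≠ 1 := fun h => hlam (by rw [h, one_pow])
  -- the basic factors
  set Y : PowerSeries ℂ := PowerSeries.C lam * expPS 1 with hYdef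
  set Dk : ℕ → PowerSeries ℂ :=
    fun i => ∏ i' ∈ (Finset.range n).erase i, (Y - PowerSeries.C (ε ^ i')) with hDkdef
  set D : PowerSeries ℂ := ∏ i ∈ Finset.range n, (Y - PowerSeries.C (ε ^ i)) with hDdef
  have hfactor : ∀ i ∈ Finset.range n, (Y - PowerSeries.C (ε ^ i)) * Dk i = D := by
    intro i hi
    exact Finset.mul_prod_erase (Finset.range n)
      (fun i' => Y - PowerSeries.C (ε ^ i')) hi
  have hconst : ∀ i : ℕ,
      PowerSeries.constantCoeff (Y - PowerSeries.C (ε ^ i)) = lam - ε ^ i := by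
    intro i
    rw [hYdef]
    simp [map_sub, map_mul, constantCoeff_expPS]
  have hfne : ∀ i : ℕ, Y - PowerSeries.C (ε ^ i) ≠ 0 := by
    intro i h
    have h2 := hconst i
    rw [h, map_zero] at h2
    exact hlam_eps i (sub_eq_zero.mp h2.symm)
  have hDne : D ≠ 0 := by
    rw [hDdef]
    exact Finset.prod_ne_zero_iff.mpr fun i _ => hfne i
  have hDY : D = Y ^ n - 1 := by
    rw [hDdef]
    exact prod_sub_roots hn0 hε Y
  have hDfull : D = PowerSeries.C (lam ^ n) * expPS (n : ℂ) - 1 := by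
    rw [hDY, hYdef, mul_pow, ← map_pow, expPS_pow]
  -- the partial-fraction building blocks
  have hDk_eq : ∀ i ∈ Finset.range n,
      Dk i = ∑ s ∈ Finset.range n, Y ^ s * PowerSeries.C ((ε ^ i) ^ (n - 1 - s)) := by
    intro i hi
    apply mul_right_cancel₀ (hfne i)
    calc Dk i * (Y - PowerSeries.C (ε ^ i)) = D := by
          rw [mul_comm (Dk i) (Y - PowerSeries.C (ε ^ i))]; exact hfactor i hi
      _ = Y ^ n - (PowerSeries.C (ε ^ i)) ^ n := by
          rw [hDY, ← map_pow, hpow1, map_one]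
      _ = (∑ s ∈ Finset.range n, Y ^ s * (PowerSeries.C (ε ^ i)) ^ (n - 1 - s)) *
            (Y - PowerSeries.C (ε ^ i)) := (geom_sum₂_mul _ _ n).symm
      _ = (∑ s ∈ Finset.range n, Y ^ s * PowerSeries.C ((ε ^ i) ^ (n - 1 - s))) *
            (Y - PowerSeries.C (ε ^ i)) := by simp only [map_pow]
  -- the core Lagrange-interpolation identity
  have hCore : ∀ j : ℕ, 1 ≤ j → j < n →
      ∑ i ∈ Finset.range n, PowerSeries.C (ε ^ i * (ε ^ i) ^ j) * Dk i
        = PowerSeries.C (n : ℂ) * Y ^ j := by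
    intro j hj1 hj2
    have step1 : ∀ i ∈ Finset.range n,
        PowerSeries.C (ε ^ i * (ε ^ i) ^ j) * Dk i
          = ∑ s ∈ Finset.range n,
              Y ^ s * PowerSeries.C ((ε ^ (1 + j + (n - 1 - s))) ^ i) := by
      intro i hi
      rw [hDk_eq i hi, Finset.mul_sum]
      refine Finset.sum_congr rfl fun s hs => ?_
      rw [mul_left_comm, ← map_mul]
      congr 1
      rw [← pow_mul, ← pow_mul, ← pow_mul, ← pow_add]
      have : i + (i * j + i * (n - 1 - s)) = (1 + j + (n - 1 - s)) * i := by ring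
      rw [← pow_add, ← this]
      ring_nf
    rw [Finset.sum_congr rfl step1, Finset.sum_comm]
    have step2 : ∀ s ∈ Finset.range n,
        ∑ i ∈ Finset.range n, Y ^ s * PowerSeries.C ((ε ^ (1 + j + (n - 1 - s))) ^ i)
          = Y ^ s * PowerSeries.C (if s = j then (n : ℂ) else 0) := by
      intro s hs
      rw [← Finset.mul_sum, ← map_sum]
      congr 2
      have hs' : s < n := Finset.mem_range.mp hs
      by_cases h : s = j
      · subst h
        have he : 1 + s + (n - 1 - s) = n := by omega
        rw [if_pos rfl, he, hεn]
        simp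
      · rw [if_neg h]
        have he1 : ε ^ (1 + j + (n - 1 - s)) ≠ 1 := by
          intro h1
          obtain ⟨d, hd⟩ := (hε.pow_eq_one_iff_dvd _).mp h1
          rcases Nat.lt_or_ge d 2 with hd2 | hd2
          · interval_cases d <;> omega
          · have h2n : n * 2 ≤ n * d := Nat.mul_le_mul_left n hd2
            omega
        rw [geom_sum_eq he1, hpow1, sub_self, zero_div]
    rw [Finset.sum_congr rfl step2, Finset.sum_eq_single j]
    · rw [if_pos rfl, mul_comm]
    · intro s _ hne
      rw [if_neg hne, map_zero, mul_zero]
    · intro h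
      exact absurd (Finset.mem_range.mpr hj2) h
  -- the bracket identity
  have hBracket :
      ∑ i ∈ Finset.Ico 1 n, PowerSeries.C (-(ε ^ i * ∑ j ∈ S, (ε ^ i) ^ j)) * Dk i
        = PowerSeries.C (S.card : ℂ) * Dk 0
            - PowerSeries.C (n : ℂ) * ∑ j ∈ S, Y ^ j := by
    have hfull :
        ∑ i ∈ Finset.range n, PowerSeries.C (ε ^ i * ∑ j ∈ S, (ε ^ i) ^ j) * Dk i
          = PowerSeries.C (n : ℂ) * ∑ j ∈ S, Y ^ j := by
      have hsw : ∀ i ∈ Finset.range n,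
          PowerSeries.C (ε ^ i * ∑ j ∈ S, (ε ^ i) ^ j) * Dk i
            = ∑ j ∈ S, PowerSeries.C (ε ^ i * (ε ^ i) ^ j) * Dk i := by
        intro i hi
        rw [Finset.mul_sum, map_sum, Finset.sum_mul]
      rw [Finset.sum_congr rfl hsw, Finset.sum_comm, Finset.mul_sum]
      exact Finset.sum_congr rfl fun j hj => hCore j (hjS j hj).1 (hjS j hj).2
    have hsplit :
        PowerSeries.C (ε ^ 0 * ∑ j ∈ S, (ε ^ 0) ^ j) * Dk 0
          + ∑ i ∈ Finset.Ico 1 n, PowerSeries.C (ε ^ i * ∑ j ∈ S, (ε ^ i) ^ j) * Dk i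
          = PowerSeries.C (n : ℂ) * ∑ j ∈ S, Y ^ j := by
      rw [← hfull, Finset.range_eq_Ico, Finset.sum_eq_sum_Ico_succ_bot hn0]
    have h0 : PowerSeries.C (ε ^ 0 * ∑ j ∈ S, (ε ^ 0) ^ j) * Dk 0
        = PowerSeries.C (S.card : ℂ) * Dk 0 := by
      simp
    have hneg : ∑ i ∈ Finset.Ico 1 n,
        PowerSeries.C (-(ε ^ i * ∑ j ∈ S, (ε ^ i) ^ j)) * Dk i
        = -∑ i ∈ Finset.Ico 1 n, PowerSeries.C (ε ^ i * ∑ j ∈ S, (ε ^ i) ^ j) * Dk i := by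
      rw [← Finset.sum_neg_distrib]
      exact Finset.sum_congr rfl fun i _ => by rw [map_neg, neg_mul]
    rw [hneg]
    linear_combination h0 - hsplit
  -- instantiated generating-function identities
  have hHk : ∀ k ∈ Finset.Ico 1 n,
      (Y - PowerSeries.C (ε ^ (n - k))) *
          PowerSeries.mk (fun s => H s (ε ^ (n - k)) / s.factorial)
        = PowerSeries.C ((1 - ε ^ (n - k)) ^ p) * expPS ((n : ℂ) * q) := by
    intro k hk
    obtain ⟨hk1, hk2⟩ := Finset.mem_Ico.mp hk
    rw [hYdef]
    exact hH (ε ^ (n - k)) (hεne1 _ (by omega) (by omega)) (hlam_eps _)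
  have hBs : (Y - 1) * PowerSeries.mk (fun s => B s ((n : ℂ) * q) lam / s.factorial)
      = PowerSeries.X * expPS ((n : ℂ) * q) := by
    rw [hYdef]
    exact hB ((n : ℂ) * q) lam hlam1
  have hBn : ∀ j ∈ S, D * rescale (n : ℂ)
        (PowerSeries.mk (fun s => B s (q + j / n) (lam ^ n) / s.factorial))
      = PowerSeries.C (n : ℂ) * (PowerSeries.X * (expPS ((n : ℂ) * q) * expPS 1 ^ j)) := by
    intro j hj
    have h1 := congrArg (rescale (n : ℂ)) (hB (q + j / n) (lam ^ n) hlam)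
    rw [map_mul, map_sub, map_mul, map_one, map_mul, rescale_C', rescale_expPS, one_mul,
      PowerSeries.rescale_X, rescale_expPS] at h1
    have e2 : (q + (j : ℂ) / n) * n = (n : ℂ) * q + j := by field_simp
    rw [e2, ← expPS_mul, ← expPS_pow j] at h1
    rw [hDfull]
    rw [h1]
    ring
  -- assembling everything
  apply mul_left_cancel₀ hDne
  have hterm : ∀ k ∈ Finset.Ico 1 n,
      D * (PowerSeries.C (c k) *
        (PowerSeries.X * PowerSeries.mk (fun s => H s (ε ^ (n - k)) / s.factorial)))
      = (PowerSeries.X * expPS ((n : ℂ) * q)) *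
          (PowerSeries.C (-(ε ^ (n - k) * ∑ j ∈ S, (ε ^ (n - k)) ^ j)) * Dk (n - k)) := by
    intro k hk
    obtain ⟨hk1, hk2⟩ := Finset.mem_Ico.mp hk
    have hmem : n - k ∈ Finset.range n := Finset.mem_range.mpr (by omega)
    have h2 := hfactor (n - k) hmem
    calc D * (PowerSeries.C (c k) *
            (PowerSeries.X * PowerSeries.mk (fun s => H s (ε ^ (n - k)) / s.factorial)))
        = PowerSeries.C (c k) * (PowerSeries.X * (Dk (n - k) *
            ((Y - PowerSeries.C (ε ^ (n - k))) *
              PowerSeries.mk (fun s => H s (ε ^ (n - k)) / s.factorial)))) := by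
          rw [← h2]; ring
      _ = PowerSeries.C (c k) * (PowerSeries.X * (Dk (n - k) *
            (PowerSeries.C ((1 - ε ^ (n - k)) ^ p) * expPS ((n : ℂ) * q)))) := by
          rw [hHk k hk]
      _ = (PowerSeries.X * expPS ((n : ℂ) * q)) *
            (PowerSeries.C (c k * (1 - ε ^ (n - k)) ^ p) * Dk (n - k)) := by
          rw [map_mul]; ring
      _ = (PowerSeries.X * expPS ((n : ℂ) * q)) *
            (PowerSeries.C (-(ε ^ (n - k) * ∑ j ∈ S, (ε ^ (n - k)) ^ j)) * Dk (n - k)) := by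
          rw [hc k hk]
  rw [Finset.mul_sum, Finset.sum_congr rfl hterm]
  have hre : ∑ k ∈ Finset.Ico 1 n,
      (PowerSeries.X * expPS ((n : ℂ) * q)) *
        (PowerSeries.C (-(ε ^ (n - k) * ∑ j ∈ S, (ε ^ (n - k)) ^ j)) * Dk (n - k))
      = ∑ i ∈ Finset.Ico 1 n,
        (PowerSeries.X * expPS ((n : ℂ) * q)) *
          (PowerSeries.C (-(ε ^ i * ∑ j ∈ S, (ε ^ i) ^ j)) * Dk i) := by
    refine Finset.sum_nbij' (fun k => n - k) (fun k => n - k) ?_ ?_ ?_ ?_ ?_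
    · intro a ha
      obtain ⟨h1, h2⟩ := Finset.mem_Ico.mp ha
      exact Finset.mem_Ico.mpr (by omega)
    · intro a ha
      obtain ⟨h1, h2⟩ := Finset.mem_Ico.mp ha
      exact Finset.mem_Ico.mpr (by omega)
    · intro a ha
      obtain ⟨h1, h2⟩ := Finset.mem_Ico.mp ha
      omega
    · intro a ha
      obtain ⟨h1, h2⟩ := Finset.mem_Ico.mp ha
      omega
    · intro a ha
      rfl
  rw [hre, ← Finset.mul_sum, hBracket]
  -- now the right-hand side
  have hD0 : D = (Y - 1) * Dk 0 := by
    have := hfactor 0 (Finset.mem_range.mpr hn0)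
    rw [pow_zero, map_one] at this
    exact this.symm
  have hRHS : ∀ j ∈ S,
      D * (PowerSeries.C (lam ^ j) *
        rescale (n : ℂ) (PowerSeries.mk (fun s => B s (q + j / n) (lam ^ n) / s.factorial)))
      = (PowerSeries.X * expPS ((n : ℂ) * q)) * (PowerSeries.C (n : ℂ) * Y ^ j) := by
    intro j hj
    rw [mul_left_comm, hBn j hj]
    have hYj : Y ^ j = PowerSeries.C (lam ^ j) * expPS 1 ^ j := by
      rw [hYdef, mul_pow, map_pow]
    rw [hYj]
    ring
  have hDBs : D * (PowerSeries.C (S.card : ℂ) *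
      PowerSeries.mk (fun s => B s ((n : ℂ) * q) lam / s.factorial))
      = PowerSeries.C (S.card : ℂ) *
          (Dk 0 * (PowerSeries.X * expPS ((n : ℂ) * q))) := by
    calc D * (PowerSeries.C (S.card : ℂ) *
            PowerSeries.mk (fun s => B s ((n : ℂ) * q) lam / s.factorial))
        = PowerSeries.C (S.card : ℂ) * (Dk 0 * ((Y - 1) *
            PowerSeries.mk (fun s => B s ((n : ℂ) * q) lam / s.factorial))) := by
          rw [hD0]; ring
      _ = _ := by rw [hBs]
  have hRHS2 : D * (PowerSeries.C (S.card : ℂ) *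
        PowerSeries.mk (fun s => B s ((n : ℂ) * q) lam / s.factorial)
        - ∑ j ∈ S, PowerSeries.C (lam ^ j) *
            rescale (n : ℂ) (PowerSeries.mk (fun s => B s (q + j / n) (lam ^ n) / s.factorial)))
      = (PowerSeries.X * expPS ((n : ℂ) * q)) *
          (PowerSeries.C (S.card : ℂ) * Dk 0
            - PowerSeries.C (n : ℂ) * ∑ j ∈ S, Y ^ j) := by
    rw [mul_sub, Finset.mul_sum, Finset.sum_congr rfl hRHS, hDBs, ← Finset.mul_sum,
      ← Finset.mul_sum]
    ring
  rw [hRHS2]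

/-- The simultaneous multiplication formula for the Ramanujan sums
`C_k = Σ_{1≤j≤n, gcd(j,n)=1} ε_n^{kj}` at `r + p = 1`:
`(-1)^{p-1} m E_{m,n}^{r,p}(nq,λ;C)
  = φ(n) B_m(nq,λ) - n^m Σ_{1≤j≤n, gcd(j,n)=1} λ^j B_m(q + j/n, λ^n)`. -/
theorem simultaneous_multiplication_formula_ramanujan
    (n : ℕ) (hn : 2 ≤ n)
    (Cf : ℤ → ℂ)
    (hCf : ∀ k : ℤ, Cf k = ∑ j ∈ (Finset.Icc 1 n).filter (fun j => Nat.gcd j n = 1),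
      eps n ^ (k * j))
    (H : ℤ → ℕ → ℂ → ℂ → ℂ → ℂ)
    (hH : ∀ (p : ℤ) (q lam γ : ℂ), γ ≠ 1 → lam ≠ γ →
      (PowerSeries.C (R := ℂ) lam * expPS 1 - PowerSeries.C (R := ℂ) γ) *
          PowerSeries.mk (fun m => H p m q lam γ / m.factorial)
        = PowerSeries.C (R := ℂ) ((1 - γ) ^ p) * expPS q)
    (B : ℕ → ℂ → ℂ → ℂ)
    (hB : ∀ (q lam : ℂ), lam ≠ 1 →
      (PowerSeries.C (R := ℂ) lam * expPS 1 - 1) *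
          PowerSeries.mk (fun m => B m q lam / m.factorial)
        = PowerSeries.X * expPS q)
    (r p : ℤ) (hrp : r + p = 1) (q lam : ℂ) (hlam : lam ^ n ≠ 1) (m : ℕ) (hm : 1 ≤ m) :
    (-1 : ℂ) ^ (p - 1) * m * dedekindE H n m r p ((n : ℂ) * q) lam Cf
      = (Nat.totient n : ℂ) * B m ((n : ℂ) * q) lam -
          (n : ℂ) ^ m * ∑ j ∈ (Finset.Icc 1 n).filter (fun j => Nat.gcd j n = 1),
            lam ^ j * B m (q + j / n) (lam ^ n) := by
  classical
  obtain ⟨m, rfl⟩ : ∃ m', m = m' + 1 := ⟨m - 1, by omega⟩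
  have hn0 : 0 < n := by omega
  have hnC : (n : ℂ) ≠ 0 := Nat.cast_ne_zero.mpr (by omega)
  have hε : IsPrimitiveRoot (eps n) n := Complex.isPrimitiveRoot_exp n (by omega)
  have hεn : eps n ^ n = 1 := hε.pow_eq_one
  have hε0 : eps n ≠ 0 := hε.ne_zero (by omega)
  have hεne1 : ∀ i : ℕ, 0 < i → i < n → eps n ^ i ≠ 1 := fun i h1 h2 =>
    hε.pow_ne_one_of_pos_of_lt h1.ne' h2
  set S : Finset ℕ := (Finset.Icc 1 n).filter (fun j => Nat.gcd j n = 1) with hSdef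
  have hjS : ∀ j ∈ S, 1 ≤ j ∧ j < n := by
    intro j hj
    rw [hSdef, Finset.mem_filter, Finset.mem_Icc] at hj
    obtain ⟨⟨h1, h2⟩, h3⟩ := hj
    refine ⟨h1, ?_⟩
    rcases eq_or_lt_of_le h2 with rfl | h
    · rw [Nat.gcd_self] at h3; omega
    · exact h
  have hScard : (S.card : ℂ) = (Nat.totient n : ℂ) := by
    congr 1
    rw [Nat.totient_eq_card_coprime]
    congr 1
    ext a
    simp only [hSdef, Finset.mem_filter, Finset.mem_Icc, Finset.mem_range]
    constructor
    · rintro ⟨⟨h1, h2⟩, h3⟩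
      have hne : a ≠ n := by rintro rfl; rw [Nat.gcd_self] at h3; omega
      exact ⟨by omega, by rwa [Nat.Coprime, Nat.gcd_comm]⟩
    · rintro ⟨h1, h2⟩
      rw [Nat.Coprime, Nat.gcd_comm] at h2
      have ha0 : a ≠ 0 := by rintro rfl; rw [Nat.gcd_zero_left] at h2; omega
      exact ⟨⟨by omega, by omega⟩, h2⟩
  have hzk : ∀ k : ℕ, k ≤ n → eps n ^ (-(k : ℤ)) = eps n ^ (n - k) := by
    intro k hk
    rw [zpow_neg, zpow_natCast]
    refine inv_eq_of_mul_eq_one_left ?_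
    rw [← pow_add]
    have hnk : n - k + k = n := by omega
    rw [hnk, hεn]
  have hCfk : ∀ k ∈ Finset.Ico 1 n, Cf (-(k : ℤ)) = ∑ j ∈ S, (eps n ^ (n - k)) ^ j := by
    intro k hk
    obtain ⟨hk1, hk2⟩ := Finset.mem_Ico.mp hk
    rw [hCf]
    refine Finset.sum_congr rfl fun j hj => ?_
    rw [← hzk k (by omega), ← zpow_natCast (eps n ^ (-(k : ℤ))) j, ← zpow_mul]
  set c : ℕ → ℂ := fun k =>
    (-1 : ℂ) ^ (p - 1) * eps n ^ (-(k : ℤ) * r) * Cf (-(k : ℤ)) / (1 - eps n ^ k) ^ p with hcdef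
  have hc : ∀ k ∈ Finset.Ico 1 n, c k * (1 - eps n ^ (n - k)) ^ p
      = -(eps n ^ (n - k) * ∑ j ∈ S, (eps n ^ (n - k)) ^ j) := by
    intro k hk
    obtain ⟨hk1, hk2⟩ := Finset.mem_Ico.mp hk
    have hk1' : eps n ^ k ≠ 1 := hεne1 k (by omega) hk2
    have hkne0 : eps n ^ k ≠ 0 := pow_ne_zero k hε0
    have h1k : (1 : ℂ) - eps n ^ k ≠ 0 := sub_ne_zero.mpr (Ne.symm hk1')
    have hdual : eps n ^ (n - k) = (eps n ^ k)⁻¹ := by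
      rw [← hzk k (by omega), zpow_neg, zpow_natCast]
    have hsub : (1 : ℂ) - eps n ^ (n - k) = (-1) * (eps n ^ k)⁻¹ * (1 - eps n ^ k) := by
      rw [hdual]
      field_simp
      ring
    have hne : (-1 : ℂ) ≠ 0 := by norm_num
    have hsign : (-1 : ℂ) ^ (p - 1) * (-1 : ℂ) ^ p = -1 := by
      have h2 : (-1 : ℂ) ^ p = (-1 : ℂ) ^ (p - 1) * (-1) := by
        rw [← zpow_add_one₀ hne]
        norm_num
      rw [h2, ← mul_assoc, ← mul_zpow]
      norm_num
    have heps : eps n ^ (-(k : ℤ) * r) * ((eps n ^ k) ^ p)⁻¹ = eps n ^ (-(k : ℤ)) := by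
      rw [← zpow_natCast (eps n) k, ← zpow_mul, ← zpow_neg, ← zpow_add₀ hε0]
      congr 1
      have h3 : -(k : ℤ) * r + -((k : ℤ) * p) = -(k : ℤ) * (r + p) := by ring
      rw [h3, hrp, mul_one]
    calc c k * (1 - eps n ^ (n - k)) ^ p
        = ((-1 : ℂ) ^ (p - 1) * eps n ^ (-(k : ℤ) * r) * Cf (-(k : ℤ))) *
            ((1 - eps n ^ (n - k)) ^ p / (1 - eps n ^ k) ^ p) := by
          simp only [hcdef]
          ring
      _ = ((-1 : ℂ) ^ (p - 1) * eps n ^ (-(k : ℤ) * r) * Cf (-(k : ℤ))) *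
            ((-1 : ℂ) ^ p * ((eps n ^ k) ^ p)⁻¹) := by
          rw [hsub, mul_zpow, mul_div_assoc, div_self (zpow_ne_zero p h1k), mul_one,
            mul_zpow, inv_zpow]
      _ = ((-1 : ℂ) ^ (p - 1) * (-1 : ℂ) ^ p) *
            (eps n ^ (-(k : ℤ) * r) * ((eps n ^ k) ^ p)⁻¹) * Cf (-(k : ℤ)) := by ring
      _ = -(eps n ^ (-(k : ℤ)) * Cf (-(k : ℤ))) := by rw [hsign, heps]; ring
      _ = -(eps n ^ (n - k) * ∑ j ∈ S, (eps n ^ (n - k)) ^ j) := by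
          rw [hzk k (by omega), hCfk k hk]
  have hser := series_main n hn (eps n) hε q lam hlam S hjS
      (fun s γ => H p s ((n : ℂ) * q) lam γ) p
      (fun γ h1 h2 => hH p ((n : ℂ) * q) lam γ h1 h2) B hB c hc
  have hfacm : ((m.factorial : ℕ) : ℂ) ≠ 0 := Nat.cast_ne_zero.mpr m.factorial_ne_zero
  have hfacm1 : (((m + 1).factorial : ℕ) : ℂ) ≠ 0 := Nat.cast_ne_zero.mpr (m + 1).factorial_ne_zero
  have hcoeff : ∑ k ∈ Finset.Ico 1 n,
        c k * (H p m ((n : ℂ) * q) lam (eps n ^ (n - k)) / (m.factorial : ℂ))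
      = (S.card : ℂ) * (B (m + 1) ((n : ℂ) * q) lam / ((m + 1).factorial : ℂ))
        - ∑ j ∈ S, lam ^ j *
            ((n : ℂ) ^ (m + 1) * (B (m + 1) (q + j / n) (lam ^ n) / ((m + 1).factorial : ℂ))) := by
    have h := congrArg (PowerSeries.coeff (m + 1)) hser
    simpa only [map_sum, map_sub, PowerSeries.coeff_C_mul, PowerSeries.coeff_succ_X_mul,
      PowerSeries.coeff_mk, PowerSeries.coeff_rescale] using h
  calc (-1 : ℂ) ^ (p - 1) * ((m + 1 : ℕ) : ℂ) * dedekindE H n (m + 1) r p ((n : ℂ) * q) lam Cf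
      = ∑ k ∈ Finset.Ico 1 n,
          ((m + 1 : ℕ) : ℂ) * (c k * H p m ((n : ℂ) * q) lam (eps n ^ (n - k))) := by
        rw [dedekindE, Finset.mul_sum]
        refine Finset.sum_congr rfl fun k hk => ?_
        obtain ⟨hk1, hk2⟩ := Finset.mem_Ico.mp hk
        simp only [Nat.add_sub_cancel]
        rw [hzk k (by omega), zpow_natCast]
        simp only [hcdef]
        ring
    _ = (((m + 1).factorial : ℕ) : ℂ) * ∑ k ∈ Finset.Ico 1 n,
          c k * (H p m ((n : ℂ) * q) lam (eps n ^ (n - k)) / (m.factorial : ℂ)) := by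
        rw [Finset.mul_sum]
        refine Finset.sum_congr rfl fun k hk => ?_
        have hfs : (((m + 1).factorial : ℕ) : ℂ) = ((m + 1 : ℕ) : ℂ) * (m.factorial : ℂ) := by
          rw [Nat.factorial_succ]
          push_cast
          ring
        rw [hfs]
        field_simp
    _ = (((m + 1).factorial : ℕ) : ℂ) *
          ((S.card : ℂ) * (B (m + 1) ((n : ℂ) * q) lam / ((m + 1).factorial : ℂ))
            - ∑ j ∈ S, lam ^ j *
              ((n : ℂ) ^ (m + 1) *
                (B (m + 1) (q + j / n) (lam ^ n) / ((m + 1).factorial : ℂ)))) := by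
        rw [hcoeff]
    _ = (Nat.totient n : ℂ) * B (m + 1) ((n : ℂ) * q) lam -
          (n : ℂ) ^ (m + 1) * ∑ j ∈ S, lam ^ j * B (m + 1) (q + j / n) (lam ^ n) := by
        rw [hScard] at *
        rw [mul_sub]
        congr 1
        · rw [hScard]
          field_simp
        · rw [Finset.mul_sum, Finset.mul_sum]
          refine Finset.sum_congr rfl fun j hj => ?_
          field_simp
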